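/- If T : X → X is nonexpansive with nonempty fixed-point set Fix(T), and {y^k} satisfies y^{k+1} = T(y^k + β_k v^k) with β_k ≥ 0, ∑β_k < ∞, ‖v^k‖ ≤ M for all k, then for every z ∈ Fix(T), lim_{k→∞} ‖y^k - z‖ exists. -/
import Mathlib


/-- Bounded-perturbation iterates of a nonexpansive map: distances to fixed
points converge. -/
theorem perturbed_nonexpansive_dist_converges
    {X : Type*} [NormedAddCommGroup X] [InnerProductSpace ℝ X] [CompleteSpace X]
    (T : X → X) (hT : ∀ u v : X, ‖T u - T v‖ ≤ ‖u - v‖)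
    (hFix : {z : X | T z = z}.Nonempty)
    (v : ℕ → X) (M : ℝ) (hv : ∀ k, ‖v k‖ ≤ M)
    (β : ℕ → ℝ) (hβ : ∀ k, 0 ≤ β k) (hβsum : Summable β)
    (y : ℕ → X) (hy : ∀ k, y (k + 1) = T (y k + β k • v k)) :
    ∀ z : X, T z = z →
      ∃ L : ℝ, Filter.Tendsto (fun k => ‖y k - z‖) Filter.atTop (nhds L) := by
  intro z hz
  have hM : 0 ≤ M := le_trans (norm_nonneg (v 0)) (hv 0)
  set a : ℕ → ℝ := fun k => ‖y k - z‖ with ha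
  -- key step inequality
  have hstep : ∀ k, a (k + 1) ≤ a k + β k * M := by
    intro k
    have h1 : a (k + 1) ≤ ‖y k + β k • v k - z‖ := by
      have := hT (y k + β k • v k) z
      rw [hz] at this
      simpa [ha, hy k] using this
    have h2 : ‖y k + β k • v k - z‖ ≤ a k + β k * M := by
      have : y k + β k • v k - z = (y k - z) + β k • v k := by abel
      rw [this]
      calc ‖(y k - z) + β k • v k‖ ≤ ‖y k - z‖ + ‖β k • v k‖ := norm_add_le _ _
        _ ≤ a k + β k * M := by
          rw [norm_smul, Real.norm_eq_abs, abs_of_nonneg (hβ k)]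
          exact add_le_add le_rfl (mul_le_mul_of_nonneg_left (hv k) (hβ k))
    exact h1.trans h2
  -- tail sums
  set r : ℕ → ℝ := fun k => ∑' j, β (j + k) with hr
  have hrsum : ∀ k, Summable fun j => β (j + k) := fun k =>
    (summable_nat_add_iff k).mpr hβsum
  have hr0 : ∀ k, 0 ≤ r k := fun k => tsum_nonneg fun j => hβ _
  have hrrec : ∀ k, r k = β k + r (k + 1) := by
    intro k
    have := Summable.tsum_eq_zero_add (hrsum k)
    simpa [hr, add_assoc, add_comm, add_left_comm] using this
  have hrtend : Filter.Tendsto r Filter.atTop (nhds 0) := by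
    exact tendsto_sum_nat_add β
  -- b = a + M * r is antitone, bounded below
  set b : ℕ → ℝ := fun k => a k + M * r k with hb
  have hbmono : Antitone b := by
    refine antitone_nat_of_succ_le fun k => ?_
    have := hstep k
    have h := hrrec k
    simp only [hb]
    nlinarith
  have hbbdd : BddBelow (Set.range b) := by
    refine ⟨0, ?_⟩
    rintro x ⟨k, rfl⟩
    have : 0 ≤ a k := norm_nonneg _
    have := hr0 k
    simp only [hb]
    nlinarith
  have hbtend : Filter.Tendsto b Filter.atTop (nhds (⨅ k, b k)) :=
    tendsto_atTop_ciInf hbmono hbbdd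
  refine ⟨⨅ k, b k, ?_⟩
  have : (fun k => a k) = fun k => b k - M * r k := by
    funext k; simp [hb]
  rw [ha, this]
  have := hbtend.sub ((hrtend.const_mul M))
  simpa using this
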